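/- Let Ω be a finite set with |Ω| ∈ 4ℤ and let C ⊆ P(Ω) be a Type II self-dual binary linear code, i.e., C = C⊥, Ω ∈ C, and |T| ∈ 4ℤ for every T ∈ C. Then for any distinct i, j ∈ Ω there exists T ∈ C with i ∈ T and j ∉ T. -/
import Mathlib


open Finset

/-- Let `Ω` be a finite set with `|Ω| ∈ 4ℤ` and `C` a Type II
self-dual binary linear code: `C` contains `∅`, is closed under symmetric
difference, contains `Ω`, every codeword has cardinality divisible by 4, and
`C` equals its dual code `{S : |S ∩ T| even for all T ∈ C}`.  Then for any
distinct `i, j ∈ Ω` there exists `T ∈ C` with `i ∈ T` and `j ∉ T`. -/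
theorem stmt6 {Ω : Type*} [Fintype Ω] [DecidableEq Ω]
    (h4 : 4 ∣ Fintype.card Ω)
    (C : Finset (Finset Ω)) (h0 : (∅ : Finset Ω) ∈ C)
    (hadd : ∀ S ∈ C, ∀ T ∈ C, symmDiff S T ∈ C)
    (hΩ : (univ : Finset Ω) ∈ C)
    (hTypeII : ∀ T ∈ C, 4 ∣ T.card)
    (hselfdual : ∀ S : Finset Ω, S ∈ C ↔ ∀ T ∈ C, Even (S ∩ T).card) :
    ∀ i j : Ω, i ≠ j → ∃ T ∈ C, i ∈ T ∧ j ∉ T := by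
  intro i j hij
  by_contra hcon
  push_neg at hcon
  -- every codeword containing i also contains j
  have key : ∀ T ∈ C, (i ∈ T ↔ j ∈ T) := by
    intro T hT
    constructor
    · exact hcon T hT
    · intro hjT
      by_contra hiT
      -- consider complement of T
      have hTc : symmDiff T univ ∈ C := hadd T hT univ hΩ
      have hmem : ∀ x : Ω, x ∈ symmDiff T univ ↔ x ∉ T := by
        intro x
        simp [symmDiff_def]
      have : j ∈ symmDiff T univ := hcon _ hTc ((hmem i).2 hiT)
      exact ((hmem j).1 this) hjT
  -- {i, j} is in the dual
  have hS : ({i, j} : Finset Ω) ∈ C := by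
    rw [hselfdual]
    intro T hT
    by_cases hiT : i ∈ T
    · have hjT : j ∈ T := (key T hT).1 hiT
      have : ({i, j} : Finset Ω) ∩ T = {i, j} := by
        apply inter_eq_left.2
        intro x hx
        rcases mem_insert.1 hx with rfl | hx
        · exact hiT
        · rw [mem_singleton.1 hx]; exact hjT
      rw [this, card_insert_of_notMem (by simpa using hij), card_singleton]
      exact even_two
    · have hjT : j ∉ T := fun h => hiT ((key T hT).2 h)
      have : ({i, j} : Finset Ω) ∩ T = ∅ := by
        apply eq_empty_of_forall_notMem
        intro x hx
        rcases mem_inter.1 hx with ⟨hx1, hx2⟩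
        rcases mem_insert.1 hx1 with rfl | hx1
        · exact hiT hx2
        · rw [mem_singleton.1 hx1] at hx2; exact hjT hx2
      simp [this]
  have := hTypeII _ hS
  rw [card_insert_of_notMem (by simpa using hij), card_singleton] at this
  omega
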